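/- arXiv:2508.04871 — 2 statements merged into one kernel-verified Lean document; each statement's English description precedes it below -/
import Mathlib

section
/- Let A ∈ ℝ^{n×n} have all entries nonnegative, and set A↑ := A⁺ = max(A,0) = A, A↓ := A⁻ = 0, and Â := [[A↑, A↓],[A↓, A↑]] ∈ ℝ^{2n×2n}. Then A is Schur stable (every eigenvalue over ℂ has modulus strictly less than 1) if and only if there exists a vector p ∈ ℝ^{2n} with all entries strictly positive such that Âp < p entrywise; i.e., for entrywise nonnegative A the LP stability condition is both necessary and sufficient. -/
open Matrix Filter Topology

noncomputable section

/-- Entrywise positive part: `M⁺ = max(M, 0)`. -/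
def matPos {m k : Type*} (M : Matrix m k ℝ) : Matrix m k ℝ :=
  Matrix.of fun i j => max (M i j) 0

/-- Entrywise negative part: `M⁻ = M⁺ − M`. -/
def matNeg {m k : Type*} (M : Matrix m k ℝ) : Matrix m k ℝ :=
  matPos M - M

/-- Diagonal part of a square matrix. -/
def diagPart {m : Type*} [DecidableEq m] (A : Matrix m m ℝ) : Matrix m m ℝ :=
  Matrix.of fun i j => if i = j then A i j else 0

/-- A real square matrix is Hurwitz if every root of its characteristic polynomial
over `ℂ` has strictly negative real part. -/
def IsHurwitz {m : Type*} [Fintype m] [DecidableEq m] (A : Matrix m m ℝ) : Prop :=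
  ∀ μ : ℂ, ((A.map Complex.ofReal).charpoly).IsRoot μ → μ.re < 0

/-- A real square matrix is Schur stable if every root of its characteristic polynomial
over `ℂ` has modulus strictly less than one. -/
def IsSchur {m : Type*} [Fintype m] [DecidableEq m] (A : Matrix m m ℝ) : Prop :=
  ∀ μ : ℂ, ((A.map Complex.ofReal).charpoly).IsRoot μ → ‖μ‖ < 1


open Polynomial
open scoped ENNReal NNReal

section Aux

attribute [local instance] Matrix.linftyOpNormedRing Matrix.linftyOpNormedAlgebra

private lemma scalar_eq_algebraMap' {n : ℕ} (μ : ℂ) :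
    Matrix.scalar (Fin n) μ = algebraMap ℂ (Matrix (Fin n) (Fin n) ℂ) μ := by
  ext i j
  simp [Matrix.scalar, Matrix.algebraMap_eq_diagonal]

private lemma root_of_mem_spectrum' {n : ℕ} (M : Matrix (Fin n) (Fin n) ℂ) (μ : ℂ)
    (h : μ ∈ spectrum ℂ M) : M.charpoly.IsRoot μ := by
  rw [spectrum.mem_iff] at h
  rw [Matrix.isUnit_iff_isUnit_det, isUnit_iff_ne_zero, not_ne_iff] at h
  unfold Polynomial.IsRoot
  rw [Matrix.charpoly, eval_det, matPolyEquiv_charmatrix]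
  simp only [eval_sub, eval_X, eval_C]
  rw [scalar_eq_algebraMap', h]

private lemma spectralRadius_lt_one' {n : ℕ} (M : Matrix (Fin n) (Fin n) ℂ)
    (hS : ∀ μ : ℂ, M.charpoly.IsRoot μ → ‖μ‖ < 1) :
    spectralRadius ℂ M < 1 := by
  have hne : M.charpoly ≠ 0 := (Matrix.charpoly_monic M).ne_zero
  set s : Finset ℂ := M.charpoly.roots.toFinset
  have hb : spectralRadius ℂ M ≤ s.sup fun μ => (‖μ‖₊ : ℝ≥0∞) := by
    refine iSup₂_le fun μ hμ => ?_
    refine Finset.le_sup (f := fun μ => (‖μ‖₊ : ℝ≥0∞)) ?_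
    have := root_of_mem_spectrum' M μ hμ
    simpa [s, Multiset.mem_toFinset, mem_roots, hne] using this
  refine hb.trans_lt ?_
  have h1 : (1 : ℝ≥0∞) = ((1 : ℝ≥0) : ℝ≥0∞) := rfl
  rw [Finset.sup_lt_iff (by simp : (⊥ : ℝ≥0∞) < 1)]
  intro μ hμ
  have h2 : ‖μ‖ < 1 := hS μ (by simpa [s, mem_roots, hne] using hμ)
  have h3 : ‖μ‖₊ < 1 := by
    rw [← NNReal.coe_lt_coe]
    simpa using h2
  rw [h1]
  exact_mod_cast h3

private lemma pow_nnnorm_le' {n : ℕ} (M : Matrix (Fin n) (Fin n) ℂ)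
    (hρ : spectralRadius ℂ M < 1) :
    ∃ r : ℝ≥0, r < 1 ∧ ∀ᶠ k in atTop, ‖M ^ k‖₊ ≤ r ^ k := by
  haveI : CompleteSpace (Matrix (Fin n) (Fin n) ℂ) := FiniteDimensional.complete ℂ _
  obtain ⟨R, hR1, hR2⟩ := exists_between hρ
  have hRtop : R ≠ ⊤ := (hR2.trans_le le_top).ne
  set r : ℝ≥0 := R.toNNReal with hr
  have hRr : R = (r : ℝ≥0∞) := (ENNReal.coe_toNNReal hRtop).symm
  refine ⟨r, ?_, ?_⟩
  · rw [← ENNReal.coe_lt_one_iff, ← hRr]; exact hR2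
  · have hG := spectrum.pow_nnnorm_pow_one_div_tendsto_nhds_spectralRadius M
    have hev : ∀ᶠ k : ℕ in atTop, (‖M ^ k‖₊ : ℝ≥0∞) ^ (1 / (k:ℝ)) < R :=
      hG.eventually_lt_const hR1
    filter_upwards [hev, eventually_ge_atTop 1] with k hk hk1
    have hk0 : (k : ℝ) ≠ 0 := by positivity
    have h2 : ((‖M ^ k‖₊ : ℝ≥0∞) ^ (1 / (k:ℝ))) ^ (k : ℝ) ≤ R ^ (k : ℝ) :=
      ENNReal.rpow_le_rpow hk.le (by positivity)
    rw [← ENNReal.rpow_mul, one_div, inv_mul_cancel₀ hk0, ENNReal.rpow_one, hRr,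
      ENNReal.rpow_natCast] at h2
    rw [← ENNReal.coe_le_coe, ENNReal.coe_pow]
    exact h2

private lemma entry_norm_le' {n : ℕ} (M : Matrix (Fin n) (Fin n) ℂ) (i j : Fin n) :
    ‖M i j‖ ≤ ‖M‖ := by
  have h1 : ‖M i j‖₊ ≤ ‖M‖₊ := by
    rw [Matrix.linfty_opNNNorm_def]
    calc ‖M i j‖₊ ≤ ∑ j' : Fin n, ‖M i j'‖₊ :=
          Finset.single_le_sum (f := fun j' => ‖M i j'‖₊) (fun j' _ => zero_le)
            (Finset.mem_univ j)
      _ ≤ _ := Finset.le_sup (f := fun i => ∑ j' : Fin n, ‖M i j'‖₊) (Finset.mem_univ i)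
  exact_mod_cast h1

private lemma map_pow_ofReal' {n : ℕ} (A : Matrix (Fin n) (Fin n) ℝ) (k : ℕ) :
    (A ^ k).map Complex.ofReal = (A.map Complex.ofReal) ^ k := by
  have h : ∀ B : Matrix (Fin n) (Fin n) ℝ, B.map Complex.ofReal =
      (Complex.ofRealHom.mapMatrix : Matrix (Fin n) (Fin n) ℝ →+* _) B := fun _ => rfl
  rw [h, h, map_pow]

private lemma summable_entries' {n : ℕ} (A : Matrix (Fin n) (Fin n) ℝ)
    (h : ∃ r : ℝ≥0, r < 1 ∧ ∀ᶠ k : ℕ in atTop, ‖(A.map Complex.ofReal) ^ k‖₊ ≤ r ^ k)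
    (i j : Fin n) : Summable (fun k => (A ^ k) i j) := by
  obtain ⟨r, hr1, hev⟩ := h
  refine Summable.of_norm_bounded_eventually_nat (g := fun k => (r:ℝ) ^ k) ?_ ?_
  · exact summable_geometric_of_lt_one r.coe_nonneg (by exact_mod_cast hr1)
  · filter_upwards [hev] with k hk
    have h1 : ‖((A ^ k).map Complex.ofReal) i j‖ ≤ ‖(A.map Complex.ofReal) ^ k‖ := by
      rw [map_pow_ofReal']; exact entry_norm_le' _ i j
    have h2 : ‖((A ^ k).map Complex.ofReal) i j‖ = ‖(A ^ k) i j‖ := by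
      simp [Matrix.map_apply]
    have h3 : ‖(A.map Complex.ofReal) ^ k‖ ≤ (r:ℝ) ^ k := by
      rw [← NNReal.coe_le_coe] at hk
      simpa [coe_nnnorm] using hk
    rw [h2] at h1
    exact h1.trans h3

end Aux

private lemma pow_entry_nonneg' {n : ℕ} (A : Matrix (Fin n) (Fin n) ℝ)
    (hA : ∀ i j, 0 ≤ A i j) (k : ℕ) : ∀ i j, 0 ≤ (A ^ k) i j := by
  induction k with
  | zero => intro i j; simp only [pow_zero]; rw [Matrix.one_apply]; positivity
  | succ k ih =>
    intro i j
    rw [pow_succ, Matrix.mul_apply]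
    exact Finset.sum_nonneg fun l _ => mul_nonneg (ih i l) (hA l j)

private lemma exists_pos_vec' {n : ℕ} (A : Matrix (Fin n) (Fin n) ℝ)
    (hA : ∀ i j, 0 ≤ A i j)
    (hsum : ∀ i j, Summable fun k => (A ^ k) i j) :
    ∃ q : Fin n → ℝ, (∀ i, 0 < q i) ∧ ∀ i, (A *ᵥ q) i < q i := by
  set f : ℕ → Fin n → ℝ := fun k j => ∑ j', (A ^ k) j j' with hf
  have hfs : ∀ j, Summable fun k => f k j := fun j =>
    summable_sum fun j' _ => hsum j j'
  have hfnn : ∀ k j, 0 ≤ f k j := fun k j =>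
    Finset.sum_nonneg fun j' _ => pow_entry_nonneg' A hA k j j'
  have hf0 : ∀ j, f 0 j = 1 := by
    intro j; simp [hf, Matrix.one_apply]
  set q : Fin n → ℝ := fun j => ∑' k, f k j with hq
  have hq1 : ∀ j, 1 ≤ q j := by
    intro j
    rw [← hf0 j]
    exact Summable.le_tsum (hfs j) 0 fun k _ => hfnn k j
  have hrec : ∀ k i, ∑ j, A i j * f k j = f (k + 1) i := by
    intro k i
    rw [hf]
    simp only
    rw [pow_succ']
    simp only [Matrix.mul_apply]
    rw [Finset.sum_comm]
    simp [Finset.mul_sum]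
  refine ⟨q, fun i => lt_of_lt_of_le one_pos (hq1 i), fun i => ?_⟩
  have hmv : (A *ᵥ q) i = ∑' k, f (k + 1) i := by
    rw [Matrix.mulVec, dotProduct]
    calc ∑ j, A i j * q j = ∑ j, ∑' k, A i j * f k j := by
          refine Finset.sum_congr rfl fun j _ => ?_
          rw [hq, tsum_mul_left]
        _ = ∑' k, ∑ j, A i j * f k j :=
          (Summable.tsum_finsetSum fun j _ => (hfs j).mul_left (A i j)).symm
        _ = ∑' k, f (k + 1) i := tsum_congr fun k => hrec k i
  have hshift : q i = 1 + ∑' k, f (k + 1) i := by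
    rw [hq]
    simpa [hf0] using Summable.tsum_eq_zero_add (hfs i)
  rw [hmv, hshift]
  linarith

private lemma schur_of_pos_vec' {n : ℕ} (A : Matrix (Fin n) (Fin n) ℝ)
    (hA : ∀ i j, 0 ≤ A i j) (q : Fin n → ℝ) (hq : ∀ i, 0 < q i)
    (hlt : ∀ i, (A *ᵥ q) i < q i) :
    ∀ μ : ℂ, ((A.map Complex.ofReal).charpoly).IsRoot μ → ‖μ‖ < 1 := by
  intro μ hroot
  set M := A.map Complex.ofReal with hM
  have hdet : (Matrix.scalar (Fin n) μ - M).det = 0 := by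
    have h : M.charpoly.eval μ = (Matrix.scalar (Fin n) μ - M).det := by
      rw [Matrix.charpoly, eval_det, matPolyEquiv_charmatrix]
      simp
    rw [← h]; exact hroot
  obtain ⟨v, hv0, hv⟩ := (Matrix.exists_mulVec_eq_zero_iff).2 hdet
  have heig : M *ᵥ v = μ • v := by
    rw [Matrix.sub_mulVec] at hv
    have h1 : Matrix.scalar (Fin n) μ *ᵥ v = μ • v := by
      have h2 : Matrix.scalar (Fin n) μ = μ • (1 : Matrix (Fin n) (Fin n) ℂ) := by
        rw [scalar_eq_algebraMap', Algebra.algebraMap_eq_smul_one]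
      rw [h2, Matrix.smul_mulVec, Matrix.one_mulVec]
    rw [h1, sub_eq_zero] at hv
    exact hv.symm
  have hne : (Finset.univ : Finset (Fin n)).Nonempty := by
    by_contra hemp
    apply hv0
    funext i
    exact absurd (Finset.mem_univ i) (fun h => hemp ⟨i, h⟩)
  set g : Fin n → ℝ := fun i => ‖v i‖ / q i with hg
  set c : ℝ := Finset.univ.sup' hne g with hc
  obtain ⟨i₀, _, hi₀⟩ := Finset.exists_mem_eq_sup' hne g
  have hcle : ∀ j, ‖v j‖ ≤ c * q j := by
    intro j
    have h : g j ≤ c := Finset.le_sup' g (Finset.mem_univ j)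
    rw [hg] at h
    calc ‖v j‖ = (‖v j‖ / q j) * q j :=
          (div_mul_cancel₀ _ (hq j).ne').symm
      _ ≤ c * q j := mul_le_mul_of_nonneg_right h (hq j).le
  have hcpos : 0 < c := by
    obtain ⟨i1, hvne⟩ : ∃ i, v i ≠ 0 := by
      by_contra hcon
      push_neg at hcon
      exact hv0 (funext hcon)
    have h : 0 < g i1 := div_pos (by simpa using hvne) (hq i1)
    exact lt_of_lt_of_le h (Finset.le_sup' g (Finset.mem_univ i1))
  have hvi₀ : ‖v i₀‖ = c * q i₀ := by
    have h : c = g i₀ := hi₀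
    rw [h, hg]
    exact (div_mul_cancel₀ _ (hq i₀).ne').symm
  have hkey : ‖μ‖ * (c * q i₀) < c * q i₀ := by
    have h1 : (M *ᵥ v) i₀ = μ * v i₀ := by rw [heig]; rfl
    have h2 : ‖(M *ᵥ v) i₀‖ ≤ ∑ j, A i₀ j * ‖v j‖ := by
      rw [Matrix.mulVec, dotProduct]
      refine (norm_sum_le _ _).trans ?_
      refine Finset.sum_le_sum fun j _ => ?_
      rw [norm_mul]
      have h : ‖M i₀ j‖ = A i₀ j := by
        rw [hM]; simp [Matrix.map_apply, abs_of_nonneg (hA i₀ j)]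
      rw [h]
    have h3 : ∑ j, A i₀ j * ‖v j‖ ≤ c * (A *ᵥ q) i₀ := by
      rw [Matrix.mulVec, dotProduct, Finset.mul_sum]
      refine Finset.sum_le_sum fun j _ => ?_
      calc A i₀ j * ‖v j‖ ≤ A i₀ j * (c * q j) :=
            mul_le_mul_of_nonneg_left (hcle j) (hA i₀ j)
        _ = c * (A i₀ j * q j) := by ring
    have h4 : c * (A *ᵥ q) i₀ < c * q i₀ :=
      mul_lt_mul_of_pos_left (hlt i₀) hcpos
    calc ‖μ‖ * (c * q i₀) = ‖(M *ᵥ v) i₀‖ := by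
          rw [h1, norm_mul, hvi₀]
      _ ≤ ∑ j, A i₀ j * ‖v j‖ := h2
      _ ≤ c * (A *ᵥ q) i₀ := h3
      _ < c * q i₀ := h4
  have hpos : 0 < c * q i₀ := mul_pos hcpos (hq i₀)
  exact (mul_lt_iff_lt_one_left hpos).mp hkey

/-- For an entrywise nonnegative matrix `A` (so `A⁺ = A`, `A⁻ = 0`), the LP condition with
the block matrix `Â = [[A⁺, A⁻],[A⁻, A⁺]]` is both necessary and sufficient for `A`
to be Schur stable. -/
theorem nonneg_schur_iff_block_lp {n : ℕ} (A : Matrix (Fin n) (Fin n) ℝ)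
    (hNonneg : ∀ i j : Fin n, 0 ≤ A i j)
    (Aup Adown : Matrix (Fin n) (Fin n) ℝ)
    (hup : Aup = matPos A) (hdown : Adown = matNeg A) :
    IsSchur A ↔ ∃ p : Fin n ⊕ Fin n → ℝ, (∀ i, 0 < p i) ∧
      ∀ i, (Matrix.fromBlocks Aup Adown Adown Aup *ᵥ p) i < p i := by
  have hup' : Aup = A := by
    rw [hup]; ext i j; exact max_eq_left (hNonneg i j)
  have hdown' : Adown = 0 := by
    rw [hdown, matNeg, ← hup, hup']
    simp
  constructor
  · intro hS
    have hsum : ∀ i j, Summable fun k => (A ^ k) i j :=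
      summable_entries' A (pow_nnnorm_le' _ (spectralRadius_lt_one' _ hS))
    obtain ⟨q, hq, hlt⟩ := exists_pos_vec' A hNonneg hsum
    refine ⟨Sum.elim q q, ?_, ?_⟩
    · rintro (i | i) <;> exact hq i
    · intro i
      rw [hup', hdown', Matrix.fromBlocks_mulVec]
      cases i with
      | inl i => simpa using hlt i
      | inr i => simpa using hlt i
  · rintro ⟨p, hp, hlt⟩
    set q : Fin n → ℝ := fun i => p (Sum.inl i) with hqdef
    have hq : ∀ i, 0 < q i := fun i => hp _
    have hlt' : ∀ i, (A *ᵥ q) i < q i := by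
      intro i
      have h := hlt (Sum.inl i)
      rw [hup', hdown', Matrix.fromBlocks_mulVec] at h
      simpa [hqdef, Function.comp_def] using h
    exact schur_of_pos_vec' A hNonneg q hq hlt'
end
end

section
/- Let f : ℝ^n → ℝ^n be differentiable with fixed point x_e (f(x_e) = x_e), and suppose the Jacobian matrix A of f at x_e is Schur stable, i.e., every eigenvalue of A over ℂ has modulus strictly less than 1. Then x_e is an asymptotically stable fixed point of the discrete-time system x_{t+1} = f(x_t); that is, (i) for every ε > 0 there exists δ > 0 such that ‖x_0 − x_e‖ < δ implies ‖f^[k](x_0) − x_e‖ < ε for all k ∈ ℕ, and (ii) there exists δ_a > 0 such that ‖x_0 − x_e‖ < δ_a implies f^[k](x_0) → x_e as k → ∞. -/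
open Matrix Filter Topology

noncomputable section

section Aux

attribute [local instance] Matrix.linftyOpNormedAddCommGroup Matrix.linftyOpNormedRing
  Matrix.linftyOpNormedAlgebra

private lemma schur_exists_contracting_power {n : ℕ} (A : Matrix (Fin n) (Fin n) ℝ)
    (hSchur : ∀ μ : ℂ, ((A.map Complex.ofReal).charpoly).IsRoot μ → ‖μ‖ < 1) :
    ∃ m : ℕ, 1 ≤ m ∧ ∀ v : Fin n → ℝ, ‖(A ^ m).mulVec v‖ ≤ (1/2) * ‖v‖ := by
  set B : Matrix (Fin n) (Fin n) ℂ := A.map Complex.ofReal with hB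
  -- spectrum is contained in charpoly roots
  have hmem : ∀ μ : ℂ, μ ∈ spectrum ℂ B → B.charpoly.IsRoot μ := by
    intro μ hμ
    rw [spectrum.mem_iff] at hμ
    have key : B.charpoly.eval μ = (Matrix.scalar (Fin n) μ - B).det := by
      rw [Matrix.charpoly, eval_det, Matrix.matPolyEquiv_charmatrix]
      simp
    have h2 : ¬ IsUnit ((Matrix.scalar (Fin n) μ - B).det) := by
      rwa [← Matrix.isUnit_iff_isUnit_det]
    rw [isUnit_iff_ne_zero, not_not] at h2
    simpa [Polynomial.IsRoot, key] using h2
  -- spectral radius is < 1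
  have hne : B.charpoly ≠ 0 := (Matrix.charpoly_monic B).ne_zero
  set S : Finset ℂ := B.charpoly.roots.toFinset with hS
  set r : NNReal := S.sup (fun μ => ‖μ‖₊) with hr
  have hrlt : r < 1 := by
    rw [hr, Finset.sup_lt_iff (by norm_num : (⊥ : NNReal) < 1)]
    intro μ hμ
    have hroot : B.charpoly.IsRoot μ := by
      rw [hS, Multiset.mem_toFinset, Polynomial.mem_roots hne] at hμ
      exact hμ
    have := hSchur μ hroot
    rw [← NNReal.coe_lt_coe]
    simpa [Complex.norm_def] using this
  have hρ : spectralRadius ℂ B < 1 := by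
    have hle : spectralRadius ℂ B ≤ (r : ENNReal) := by
      rw [spectralRadius]
      refine iSup₂_le fun μ hμ => ?_
      refine ENNReal.coe_le_coe.2 ?_
      refine Finset.le_sup ?_
      rw [hS, Multiset.mem_toFinset, Polynomial.mem_roots hne]
      exact hmem μ hμ
    calc spectralRadius ℂ B ≤ (r : ENNReal) := hle
      _ < 1 := by exact_mod_cast hrlt
  -- Gelfand's formula: some power has small norm
  obtain ⟨c, hc1, hc2⟩ := ENNReal.lt_iff_exists_nnreal_btwn.mp hρ
  have hc2' : c < 1 := by exact_mod_cast hc2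
  have hG := spectrum.pow_nnnorm_pow_one_div_tendsto_nhds_spectralRadius B
  have hev1 : ∀ᶠ k : ℕ in atTop, (‖B ^ k‖₊ : ENNReal) ^ (1 / (k:ℝ)) < (c : ENNReal) :=
    hG.eventually_lt_const hc1
  have hcpow : Tendsto (fun k : ℕ => (c:ℝ) ^ k) atTop (𝓝 0) :=
    tendsto_pow_atTop_nhds_zero_of_lt_one c.coe_nonneg (by exact_mod_cast hc2')
  have hev2 : ∀ᶠ k : ℕ in atTop, (c:ℝ) ^ k < 1/2 :=
    hcpow.eventually_lt_const (by norm_num)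
  obtain ⟨m, hm1, hmlt, hmc⟩ :=
    ((eventually_ge_atTop 1).and (hev1.and hev2)).exists
  refine ⟨m, hm1, ?_⟩
  have hm0 : (m:ℝ) ≠ 0 := by positivity
  have key : (‖B ^ m‖₊ : ENNReal) < (c : ENNReal) ^ (m:ℕ) := by
    have h3 := ENNReal.rpow_lt_rpow hmlt (by positivity : (0:ℝ) < (m:ℝ))
    rwa [← ENNReal.rpow_mul, one_div_mul_cancel hm0, ENNReal.rpow_one,
      ENNReal.rpow_natCast] at h3
  have key2 : ‖B ^ m‖₊ < c ^ m := by exact_mod_cast key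
  have hBm : ‖B ^ m‖ < 1/2 := by
    calc ‖B ^ m‖ = ((‖B ^ m‖₊ : NNReal) : ℝ) := rfl
      _ ≤ ((c ^ m : NNReal) : ℝ) := by exact_mod_cast key2.le
      _ = (c:ℝ) ^ m := by push_cast; ring
      _ < 1/2 := hmc
  -- transfer the norm bound to the real matrix
  have hpow : B ^ m = (A ^ m).map Complex.ofReal := by
    have h4 := map_pow ((Complex.ofRealHom : ℝ →+* ℂ).mapMatrix :
      Matrix (Fin n) (Fin n) ℝ →+* Matrix (Fin n) (Fin n) ℂ) A m
    exact h4.symm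
  have hnorm_eq : ‖A ^ m‖₊ = ‖B ^ m‖₊ := by
    rw [hpow]
    simp [Matrix.linfty_opNNNorm_def, Matrix.map_apply]
  have hAm : ‖A ^ m‖ < 1/2 := by
    have : ‖A ^ m‖ = ‖B ^ m‖ := congrArg NNReal.toReal hnorm_eq
    rw [this]; exact hBm
  intro v
  calc ‖(A ^ m).mulVec v‖ ≤ ‖A ^ m‖ * ‖v‖ := Matrix.linfty_opNorm_mulVec _ _
    _ ≤ (1/2) * ‖v‖ := by
        have := norm_nonneg v
        nlinarith [norm_nonneg (A ^ m)]

end Aux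

/-- Indirect Lyapunov criterion for DT systems: if `f` is differentiable with fixed point
`x_e` and its Jacobian `A` at `x_e` is Schur stable, then `x_e` is an asymptotically stable
fixed point of the discrete-time system `x_{t+1} = f(x_t)`. -/
theorem schur_jacobian_implies_dt_asymptotic_stability {n : ℕ}
    (f : (Fin n → ℝ) → (Fin n → ℝ)) (x_e : Fin n → ℝ)
    (hdiff : Differentiable ℝ f) (hfix : f x_e = x_e)
    (A : Matrix (Fin n) (Fin n) ℝ)
    (hA : HasFDerivAt f (Matrix.mulVecLin A).toContinuousLinearMap x_e)
    (hSchur : IsSchur A) :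
    (∀ ε > 0, ∃ δ > 0, ∀ x₀ : Fin n → ℝ, ‖x₀ - x_e‖ < δ →
        ∀ k : ℕ, ‖f^[k] x₀ - x_e‖ < ε) ∧
    (∃ δₐ > 0, ∀ x₀ : Fin n → ℝ, ‖x₀ - x_e‖ < δₐ →
        Tendsto (fun k : ℕ => f^[k] x₀) atTop (𝓝 x_e)) := by
  obtain ⟨m, hm1, hcontr⟩ := schur_exists_contracting_power A hSchur
  have hm0 : 0 < m := hm1
  set L := (Matrix.mulVecLin A).toContinuousLinearMap with hLdef
  -- powers of L act as matrix powers
  have hLpow : ∀ (k : ℕ) (v : Fin n → ℝ), (L ^ k) v = (A ^ k).mulVec v := by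
    intro k
    induction k with
    | zero => intro v; simp
    | succ k ih =>
      intro v
      rw [pow_succ, ContinuousLinearMap.mul_apply, ih (L v)]
      have hLv : L v = A.mulVec v := by simp [hLdef]
      rw [hLv, Matrix.mulVec_mulVec, ← pow_succ]
  -- derivative of the m-th iterate
  have hfixm : f^[m] x_e = x_e := Function.iterate_fixed hfix m
  have hFd : HasFDerivAt f^[m] (L ^ m) x_e := hA.iterate hfix m
  have hlo := hFd.isLittleO
  have hev := hlo.bound (by norm_num : (0:ℝ) < 1/4)
  rw [Metric.eventually_nhds_iff] at hev
  obtain ⟨δ₀, hδ₀, hball₀⟩ := hev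
  -- one-step contraction estimate
  have hstep : ∀ x : Fin n → ℝ, ‖x - x_e‖ < δ₀ → ‖f^[m] x - x_e‖ ≤ 3/4 * ‖x - x_e‖ := by
    intro x hx
    have h1 : ‖f^[m] x - f^[m] x_e - (L ^ m) (x - x_e)‖ ≤ 1/4 * ‖x - x_e‖ := by
      have := hball₀ (y := x) (by rwa [dist_eq_norm])
      simpa using this
    rw [hfixm] at h1
    have h2 : ‖(L ^ m) (x - x_e)‖ ≤ 1/2 * ‖x - x_e‖ := by
      rw [hLpow]; exact hcontr _
    have h3 : ‖f^[m] x - x_e‖ ≤ ‖f^[m] x - x_e - (L ^ m) (x - x_e)‖ + ‖(L ^ m) (x - x_e)‖ := by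
      have := norm_add_le (f^[m] x - x_e - (L ^ m) (x - x_e)) ((L ^ m) (x - x_e))
      simpa using this
    linarith
  -- iterated contraction estimate
  have hiter : ∀ (q : ℕ) (x : Fin n → ℝ), ‖x - x_e‖ < δ₀ →
      ‖(f^[m])^[q] x - x_e‖ ≤ (3/4) ^ q * ‖x - x_e‖ := by
    intro q
    induction q with
    | zero => intro x _; simp
    | succ q ih =>
      intro x hx
      have h1 := ih x hx
      have hpowle : ((3:ℝ)/4) ^ q ≤ 1 := pow_le_one₀ (by norm_num) (by norm_num)
      have hle : ‖(f^[m])^[q] x - x_e‖ ≤ ‖x - x_e‖ := by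
        calc ‖(f^[m])^[q] x - x_e‖ ≤ (3/4) ^ q * ‖x - x_e‖ := h1
          _ ≤ 1 * ‖x - x_e‖ := by
              have := norm_nonneg (x - x_e); nlinarith
          _ = ‖x - x_e‖ := one_mul _
      have hlt : ‖(f^[m])^[q] x - x_e‖ < δ₀ := lt_of_le_of_lt hle hx
      rw [Function.iterate_succ_apply']
      calc ‖f^[m] ((f^[m])^[q] x) - x_e‖ ≤ 3/4 * ‖(f^[m])^[q] x - x_e‖ := hstep _ hlt
        _ ≤ 3/4 * ((3/4) ^ q * ‖x - x_e‖) := by nlinarith [norm_nonneg ((f^[m])^[q] x - x_e)]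
        _ = (3/4) ^ (q+1) * ‖x - x_e‖ := by ring
  -- decomposition of arbitrary iterates
  have hdecomp : ∀ (k : ℕ) (x : Fin n → ℝ), f^[k] x = f^[k % m] ((f^[m])^[k / m] x) := by
    intro k x
    conv_lhs => rw [← Nat.mod_add_div k m]
    rw [Function.iterate_add_apply, Function.iterate_mul]
  -- uniform continuity moduli for the first m iterates
  have hmod : ∀ ε : ℝ, 0 < ε → ∃ δ' > 0, ∀ r : ℕ, r < m →
      ∀ y : Fin n → ℝ, ‖y - x_e‖ < δ' → ‖f^[r] y - x_e‖ < ε := by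
    intro ε hε
    have H : ∀ r : ℕ, ∃ d, 0 < d ∧ ∀ y : Fin n → ℝ, ‖y - x_e‖ < d → ‖f^[r] y - x_e‖ < ε := by
      intro r
      have hc : ContinuousAt f^[r] x_e := ((hdiff.continuous).iterate r).continuousAt
      rw [Metric.continuousAt_iff] at hc
      obtain ⟨d, hd, hballd⟩ := hc ε hε
      refine ⟨d, hd, fun y hy => ?_⟩
      have := hballd (x := y) (by rwa [dist_eq_norm])
      rwa [dist_eq_norm, Function.iterate_fixed hfix r] at this
    choose d hd hballd using H
    refine ⟨(Finset.range m).inf' ⟨0, Finset.mem_range.2 hm0⟩ d, ?_, ?_⟩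
    · exact (Finset.lt_inf'_iff _).mpr fun r _ => hd r
    · intro r hr y hy
      exact hballd r y (hy.trans_le (Finset.inf'_le d (Finset.mem_range.2 hr)))
  constructor
  · -- stability
    intro ε hε
    obtain ⟨δ', hδ', hδball⟩ := hmod ε hε
    refine ⟨min δ₀ δ', lt_min hδ₀ hδ', ?_⟩
    intro x₀ hx₀ k
    rw [hdecomp k x₀]
    refine hδball (k % m) (Nat.mod_lt _ hm0) _ ?_
    have h1 := hiter (k / m) x₀ (hx₀.trans_le (min_le_left _ _))
    have hpowle : ((3:ℝ)/4) ^ (k / m) ≤ 1 := pow_le_one₀ (by norm_num) (by norm_num)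
    have h2 : ‖(f^[m])^[k / m] x₀ - x_e‖ ≤ ‖x₀ - x_e‖ := by
      have := norm_nonneg (x₀ - x_e); nlinarith
    exact lt_of_le_of_lt h2 (hx₀.trans_le (min_le_right _ _))
  · -- asymptotic convergence
    refine ⟨δ₀, hδ₀, ?_⟩
    intro x₀ hx₀
    rw [Metric.tendsto_atTop]
    intro ε hε
    obtain ⟨δ', hδ', hδball⟩ := hmod ε hε
    have htend : Tendsto (fun q : ℕ => (3/4:ℝ) ^ q * ‖x₀ - x_e‖) atTop (𝓝 0) := by
      have h0 := (tendsto_pow_atTop_nhds_zero_of_lt_one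
        (by norm_num : (0:ℝ) ≤ 3/4) (by norm_num : (3/4:ℝ) < 1)).mul_const ‖x₀ - x_e‖
      simpa using h0
    obtain ⟨Q, hQ⟩ := (eventually_atTop.mp (htend.eventually_lt_const hδ'))
    refine ⟨m * Q, fun k hk => ?_⟩
    rw [dist_eq_norm, hdecomp k x₀]
    refine hδball (k % m) (Nat.mod_lt _ hm0) _ ?_
    have hq : Q ≤ k / m := (Nat.le_div_iff_mul_le hm0).2 (by rwa [Nat.mul_comm] at hk)
    have hmono : ((3:ℝ)/4) ^ (k / m) ≤ (3/4) ^ Q :=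
      pow_le_pow_of_le_one (by norm_num) (by norm_num) hq
    have h1 := hiter (k / m) x₀ hx₀
    have h2 := hQ Q le_rfl
    have h3 := hQ (k / m) hq
    exact lt_of_le_of_lt h1 h3
end
end
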